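/- Let d ≥ 1 and let φ : GL⁺(d) × ℝ^d → ℝ be differentiable and frame indifferent in the coupled sense φ(QF, Qm) = φ(F, m) for every Q ∈ SO(d), F ∈ GL⁺(d), m ∈ ℝ^d. Denote by φ_F'(F,m) ∈ ℝ^{d×d} and φ_m'(F,m) ∈ ℝ^d the partial gradients. Then for every (F,m) the matrix φ_F'(F,m)Fᵀ + φ_m'(F,m) ⊗ m is symmetric, i.e. skw(φ_F'(F,m)Fᵀ + φ_m'(F,m) ⊗ m) = 0. -/

import Mathlib

open Matrix NormedSpace

attribute [local instance] Matrix.frobeniusNormedAddCommGroup Matrix.frobeniusNormedSpace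

section ExpAux

attribute [local instance] Matrix.frobeniusNormedRing Matrix.frobeniusNormedAlgebra

lemma rotationPath_exists (d : ℕ) (W : Matrix (Fin d) (Fin d) ℝ) (hW : Wᵀ = -W) :
    ∃ Q : ℝ → Matrix (Fin d) (Fin d) ℝ,
      (∀ t, (Q t)ᵀ * Q t = 1) ∧ (∀ t, (Q t).det = 1) ∧ Q 0 = 1 ∧ HasDerivAt Q W 0 := by
  have horth : ∀ t : ℝ, (exp (t • W))ᵀ * exp (t • W) = 1 := by
    intro t
    have h1 : (exp (t • W))ᵀ = exp (-(t • W)) := by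
      rw [← Matrix.exp_transpose, transpose_smul, hW, smul_neg]
    rw [h1, ← Matrix.exp_add_of_commute (-(t • W)) (t • W) (Commute.neg_left rfl), neg_add_cancel, exp_zero]
  have hsq : ∀ t : ℝ, (exp (t • W)).det ^ 2 = 1 := by
    intro t
    have := congrArg Matrix.det (horth t)
    rwa [det_mul, det_transpose, ← sq, det_one] at this
  have hne : ∀ t : ℝ, (exp (t • W)).det ≠ 0 := by
    intro t h
    have := hsq t
    rw [h] at this
    norm_num at this
  have hcont : Continuous fun s : ℝ => (exp (s • W)).det :=
    Continuous.matrix_det (continuous_iff_continuousAt.2 fun s =>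
      (hasDerivAt_exp_smul_const (𝕂 := ℝ) W s).continuousAt)
  have hdet : ∀ t : ℝ, (exp (t • W)).det = 1 := by
    intro t
    have hcases : (exp (t • W)).det = 1 ∨ (exp (t • W)).det = -1 := by
      rcases mul_eq_zero.1 (show ((exp (t • W)).det - 1) * ((exp (t • W)).det + 1) = 0 by
        nlinarith [hsq t]) with h | h
      · exact Or.inl (by linarith)
      · exact Or.inr (by linarith)
    rcases hcases with h | h
    · exact h
    · exfalso
      have h0 : (fun s : ℝ => (exp (s • W)).det) 0 = 1 := by simp [exp_zero]
      have hmem : (0 : ℝ) ∈ Set.uIcc ((fun s : ℝ => (exp (s • W)).det) 0)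
          ((fun s : ℝ => (exp (s • W)).det) t) := by
        rw [h0]; simp only [h]
        rw [Set.mem_uIcc]; norm_num
      obtain ⟨s, -, hs⟩ := intermediate_value_uIcc (hcont.continuousOn) hmem
      exact hne s hs
  refine ⟨fun t => exp (t • W), horth, hdet, by simp [exp_zero], ?_⟩
  have := hasDerivAt_exp_smul_const (𝕂 := ℝ) W 0
  rw [zero_smul, NormedSpace.exp_zero, one_mul] at this
  exact this

end ExpAux

lemma trace_aux (d : ℕ) (A W F : Matrix (Fin d) (Fin d) ℝ) :
    (Aᵀ * (W * F)).trace = ∑ i, ∑ j, W i j * (A * Fᵀ) i j := by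
  simp only [Matrix.trace, Matrix.diag, Matrix.mul_apply, Matrix.transpose_apply,
    Finset.sum_mul, Finset.mul_sum]
  rw [Finset.sum_comm]
  refine Finset.sum_congr rfl fun k _ => ?_
  rw [Finset.sum_comm]
  refine Finset.sum_congr rfl fun p _ => Finset.sum_congr rfl fun l _ => by ring

lemma vec_aux (d : ℕ) (φm m : Fin d → ℝ) (W : Matrix (Fin d) (Fin d) ℝ) :
    ∑ i, φm i * W.mulVec m i = ∑ i, ∑ j, W i j * vecMulVec φm m i j := by
  simp only [Matrix.mulVec, dotProduct, vecMulVec_apply, Finset.mul_sum]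
  exact Finset.sum_congr rfl fun i _ => Finset.sum_congr rfl fun j _ => by ring

/-- Coupled frame indifference `φ(QF, Qm) = φ(F, m)` of a differentiable magneto-elastic
energy implies that `φ_F'(F,m) Fᵀ + φ_m'(F,m) ⊗ m` is symmetric, i.e. its skew part
vanishes.  The partial gradients are characterized by the partial Fréchet derivatives via
the Frobenius inner product and the Euclidean inner product, respectively. -/
theorem skw_magnetoelastic_stress_eq_zero (d : ℕ) (hd : 1 ≤ d)
    (φ : Matrix (Fin d) (Fin d) ℝ → (Fin d → ℝ) → ℝ)
    (φF : Matrix (Fin d) (Fin d) ℝ → (Fin d → ℝ) → Matrix (Fin d) (Fin d) ℝ)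
    (φm : Matrix (Fin d) (Fin d) ℝ → (Fin d → ℝ) → (Fin d → ℝ))
    (hdiff : ∀ (F : Matrix (Fin d) (Fin d) ℝ) (m : Fin d → ℝ), 0 < F.det →
        DifferentiableAt ℝ (fun p : Matrix (Fin d) (Fin d) ℝ × (Fin d → ℝ) => φ p.1 p.2) (F, m))
    (hgradF : ∀ (F : Matrix (Fin d) (Fin d) ℝ) (m : Fin d → ℝ), 0 < F.det →
        ∀ H : Matrix (Fin d) (Fin d) ℝ,
          fderiv ℝ (fun F' => φ F' m) F H = ((φF F m)ᵀ * H).trace)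
    (hgradm : ∀ (F : Matrix (Fin d) (Fin d) ℝ) (m : Fin d → ℝ), 0 < F.det →
        ∀ h : Fin d → ℝ,
          fderiv ℝ (fun m' => φ F m') m h = ∑ i, φm F m i * h i)
    (hframe : ∀ (Q F : Matrix (Fin d) (Fin d) ℝ) (m : Fin d → ℝ),
        Qᵀ * Q = 1 → Q.det = 1 → 0 < F.det → φ (Q * F) (Q.mulVec m) = φ F m)
    (F : Matrix (Fin d) (Fin d) ℝ) (m : Fin d → ℝ) (hF : 0 < F.det) :
    (1 / 2 : ℝ) • ((φF F m * Fᵀ + vecMulVec (φm F m) m)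
        - (φF F m * Fᵀ + vecMulVec (φm F m) m)ᵀ) = 0 := by
  set S : Matrix (Fin d) (Fin d) ℝ := φF F m * Fᵀ + vecMulVec (φm F m) m with hSdef
  set Φ : Matrix (Fin d) (Fin d) ℝ × (Fin d → ℝ) → ℝ := fun p => φ p.1 p.2 with hΦdef
  have hΦ : HasFDerivAt Φ (fderiv ℝ Φ (F, m)) (F, m) := (hdiff F m hF).hasFDerivAt
  set D := fderiv ℝ Φ (F, m) with hDdef
  -- decomposition of the full derivative into partials
  have hD1 : ∀ H : Matrix (Fin d) (Fin d) ℝ, D (H, 0) = ((φF F m)ᵀ * H).trace := by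
    intro H
    have hinner : HasFDerivAt (fun F' : Matrix (Fin d) (Fin d) ℝ => (F', m))
        ((ContinuousLinearMap.id ℝ _).prod 0) F :=
      (hasFDerivAt_id F).prodMk (hasFDerivAt_const m F)
    have hc : HasFDerivAt (fun F' => φ F' m)
        (D.comp ((ContinuousLinearMap.id ℝ _).prod 0)) F := by have := hΦ.comp F hinner; exact this
    have := hgradF F m hF H
    rw [hc.fderiv] at this
    simpa using this
  have hD2 : ∀ h : Fin d → ℝ, D (0, h) = ∑ i, φm F m i * h i := by
    intro h
    have hinner : HasFDerivAt (fun m' : Fin d → ℝ => (F, m'))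
        ((0 : (Fin d → ℝ) →L[ℝ] Matrix (Fin d) (Fin d) ℝ).prod (ContinuousLinearMap.id ℝ _)) m :=
      (hasFDerivAt_const F m).prodMk (hasFDerivAt_id m)
    have hc : HasFDerivAt (fun m' => φ F m')
        (D.comp ((0 : (Fin d → ℝ) →L[ℝ] Matrix (Fin d) (Fin d) ℝ).prod
          (ContinuousLinearMap.id ℝ _))) m := hΦ.comp m hinner
    have := hgradm F m hF h
    rw [hc.fderiv] at this
    simpa using this
  -- the key identity for skew-symmetric W
  have key : ∀ W : Matrix (Fin d) (Fin d) ℝ, Wᵀ = -W →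
      ∑ i, ∑ j, W i j * S i j = 0 := by
    intro W hW
    obtain ⟨Q, horth, hdet, hQ0, hQ'⟩ := rotationPath_exists d W hW
    let R : Matrix (Fin d) (Fin d) ℝ →ₗ[ℝ] Matrix (Fin d) (Fin d) ℝ :=
      { toFun := fun A => A * F
        map_add' := fun A B => add_mul A B F
        map_smul' := fun c A => smul_mul_assoc c A F }
    have hmul : HasDerivAt (fun t => Q t * F) (W * F) 0 :=
      R.toContinuousLinearMap.hasFDerivAt.comp_hasDerivAt 0 hQ'
    let L : Matrix (Fin d) (Fin d) ℝ →ₗ[ℝ] (Fin d → ℝ) :=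
      { toFun := fun A => A.mulVec m
        map_add' := fun A B => Matrix.add_mulVec A B m
        map_smul' := fun c A => by simp [Matrix.smul_mulVec] }
    have hvec : HasDerivAt (fun t => (Q t).mulVec m) (W.mulVec m) 0 :=
      L.toContinuousLinearMap.hasFDerivAt.comp_hasDerivAt 0 hQ'
    have hp : HasDerivAt (fun t => (Q t * F, (Q t).mulVec m)) (W * F, W.mulVec m) 0 :=
      hmul.prodMk hvec
    have hp0 : (Q 0 * F, (Q 0).mulVec m) = (F, m) := by
      rw [hQ0]; simp
    have hΦ' : HasFDerivAt Φ D (Q 0 * F, (Q 0).mulVec m) := by rw [hp0]; exact hΦ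
    have hg : HasDerivAt (fun t => Φ (Q t * F, (Q t).mulVec m)) (D (W * F, W.mulVec m)) 0 :=
      by have := hΦ'.comp_hasDerivAt 0 hp; exact this
    have hconst : (fun t => Φ (Q t * F, (Q t).mulVec m)) = fun _ => φ F m := by
      funext t
      exact hframe (Q t) F m (horth t) (hdet t) hF
    have hzero : D (W * F, W.mulVec m) = 0 := by
      have h0 : HasDerivAt (fun t => Φ (Q t * F, (Q t).mulVec m)) 0 0 := by
        rw [hconst]; exact hasDerivAt_const 0 _
      exact hg.unique h0
    have hsplit : D (W * F, W.mulVec m) = D (W * F, 0) + D (0, W.mulVec m) := by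
      rw [← map_add]
      congr 1
      simp [Prod.mk_add_mk]
    rw [hsplit, hD1, hD2] at hzero
    rw [trace_aux, vec_aux] at hzero
    rw [hSdef]
    simp only [Matrix.add_apply, mul_add, Finset.sum_add_distrib] at *
    convert hzero using 2
  -- conclude entrywise
  ext i j
  have hWskew : (Matrix.of fun k l : Fin d =>
      (if k = i ∧ l = j then (1:ℝ) else 0) - (if k = j ∧ l = i then 1 else 0))ᵀ
      = -(Matrix.of fun k l : Fin d =>
      (if k = i ∧ l = j then (1:ℝ) else 0) - (if k = j ∧ l = i then 1 else 0)) := by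
    ext k l
    simp only [transpose_apply, Matrix.of_apply, Matrix.neg_apply, neg_sub]
    congr 1 <;> simp [and_comm]
  have hk := key _ hWskew
  have hsum : ∑ k, ∑ l, (Matrix.of fun k l : Fin d =>
      (if k = i ∧ l = j then (1:ℝ) else 0) - (if k = j ∧ l = i then 1 else 0)) k l * S k l
      = S i j - S j i := by
    simp [Matrix.of_apply, sub_mul, ite_mul, one_mul, zero_mul, Finset.sum_sub_distrib,
      ite_and, Finset.sum_ite_eq']
  rw [hsum] at hk
  simp only [Matrix.smul_apply, Matrix.sub_apply, Matrix.add_apply, Matrix.transpose_apply,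
    Matrix.zero_apply, smul_eq_mul]
  have : S i j - S j i = 0 := hk
  simp only [hSdef, Matrix.add_apply, Matrix.transpose_apply] at this ⊢
  linarith
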